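/- arXiv:2605.19288 — 2 statements merged into one kernel-verified Lean document; each statement's English description precedes it below -/
import Mathlib

section
/- Let n ≥ 1, 0 < s < n/2, and set β ∈ ℝ with β > 0 and β^{−4s/(n+2s)} > (n/2 − s + 1)/(n/2 + s + 1). Then for every integer l ≥ 2, β^{−4s/(n+2s)} · (n/2 − s)/(n/2 + s) · Γ(n/2 − s)/Γ(n/2 + s) − Γ(l + n/2 − s)/Γ(l + n/2 + s) ≥ Γ(n/2 − s + 1)/Γ(n/2 + s + 1) · (β^{−4s/(n+2s)} − (n/2 − s + 1)/(n/2 + s + 1)). -/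
open Real

lemma gamma_ratio_mono (a b : ℝ) (ha : 0 < a) (hab : a ≤ b) :
    ∀ l : ℕ, 2 ≤ l → Gamma (l + a) / Gamma (l + b) ≤ Gamma (2 + a) / Gamma (2 + b) := by
  intro l hl
  induction l with
  | zero => omega
  | succ k ih =>
    rcases Nat.lt_or_ge k 2 with hk | hk
    · interval_cases k
      · omega
      · norm_num
    · have hb : 0 < b := lt_of_lt_of_le ha hab
      have hka : (0:ℝ) < k + a := by positivity
      have hkb : (0:ℝ) < k + b := by positivity
      have h1 : Gamma ((k:ℝ) + 1 + a) = (k + a) * Gamma (k + a) := by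
        rw [show (k:ℝ) + 1 + a = ((k:ℝ) + a) + 1 by ring, Gamma_add_one hka.ne']
      have h2 : Gamma ((k:ℝ) + 1 + b) = (k + b) * Gamma (k + b) := by
        rw [show (k:ℝ) + 1 + b = ((k:ℝ) + b) + 1 by ring, Gamma_add_one hkb.ne']
      have hGa : 0 < Gamma ((k:ℝ) + a) := Gamma_pos_of_pos hka
      have hGb : 0 < Gamma ((k:ℝ) + b) := Gamma_pos_of_pos hkb
      calc Gamma ((k+1 : ℕ) + a) / Gamma ((k+1 : ℕ) + b)
          = ((k + a) / (k + b)) * (Gamma ((k:ℝ) + a) / Gamma ((k:ℝ) + b)) := by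
            push_cast; rw [h1, h2]; field_simp
        _ ≤ 1 * (Gamma ((k:ℝ) + a) / Gamma ((k:ℝ) + b)) := by
            apply mul_le_mul_of_nonneg_right _ (by positivity)
            rw [div_le_one hkb]; linarith
        _ = Gamma ((k:ℝ) + a) / Gamma ((k:ℝ) + b) := one_mul _
        _ ≤ _ := ih hk

/-- Spectral gap estimate: for `n ≥ 1`, `0 < s < n/2`, `β > 0` with
`β^(−4s/(n+2s)) > (n/2−s+1)/(n/2+s+1)`, and every integer `l ≥ 2`,
`β^(−4s/(n+2s)) · (n/2−s)/(n/2+s) · Γ(n/2−s)/Γ(n/2+s) − Γ(l+n/2−s)/Γ(l+n/2+s)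
  ≥ Γ(n/2−s+1)/Γ(n/2+s+1) · (β^(−4s/(n+2s)) − (n/2−s+1)/(n/2+s+1))`. -/
theorem spectral_gap_estimate (n : ℕ) (hn : 1 ≤ n) (s : ℝ)
    (hs0 : 0 < s) (hs : s < n / 2) (β : ℝ) (hβ : 0 < β)
    (hβ' : β ^ (-(4 * s) / (n + 2 * s)) > (n / 2 - s + 1) / (n / 2 + s + 1))
    (l : ℕ) (hl : 2 ≤ l) :
    β ^ (-(4 * s) / (n + 2 * s)) * ((n / 2 - s) / (n / 2 + s)) *
        (Gamma (n / 2 - s) / Gamma (n / 2 + s)) -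
      Gamma (l + n / 2 - s) / Gamma (l + n / 2 + s) ≥
    Gamma (n / 2 - s + 1) / Gamma (n / 2 + s + 1) *
        (β ^ (-(4 * s) / (n + 2 * s)) - (n / 2 - s + 1) / (n / 2 + s + 1)) := by
  set B := β ^ (-(4 * s) / (n + 2 * s)) with hB
  set a := (n:ℝ) / 2 - s with ha'
  set b := (n:ℝ) / 2 + s with hb'
  have ha : 0 < a := by simp [ha']; linarith
  have hb : 0 < b := by positivity
  have hab : a ≤ b := by simp [ha', hb']; linarith
  have hGa : 0 < Gamma a := Gamma_pos_of_pos ha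
  have hGb : 0 < Gamma b := Gamma_pos_of_pos hb
  have hGa1 : Gamma (a + 1) = a * Gamma a := Gamma_add_one ha.ne'
  have hGb1 : Gamma (b + 1) = b * Gamma b := Gamma_add_one hb.ne'
  have hGa2 : Gamma (2 + a) = (a + 1) * Gamma (a + 1) := by
    rw [show (2:ℝ) + a = (a + 1) + 1 by ring, Gamma_add_one (by positivity)]
  have hGb2 : Gamma (2 + b) = (b + 1) * Gamma (b + 1) := by
    rw [show (2:ℝ) + b = (b + 1) + 1 by ring, Gamma_add_one (by positivity)]
  have key : Gamma ((l:ℝ) + a) / Gamma ((l:ℝ) + b) ≤ Gamma (2 + a) / Gamma (2 + b) :=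
    gamma_ratio_mono a b ha hab l hl
  have e1 : B * (a / b) * (Gamma a / Gamma b) = B * (Gamma (a + 1) / Gamma (b + 1)) := by
    rw [hGa1, hGb1]; field_simp
  have e2 : Gamma (2 + a) / Gamma (2 + b)
      = Gamma (a + 1) / Gamma (b + 1) * ((a + 1) / (b + 1)) := by
    rw [hGa2, hGb2, hGa1, hGb1]
    have h1 : (0:ℝ) < a * Gamma a := by positivity
    have h2 : (0:ℝ) < b * Gamma b := by positivity
    field_simp
  have hl1 : (l:ℝ) + (n:ℝ)/2 - s = (l:ℝ) + a := by rw [ha']; ring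
  have hl2 : (l:ℝ) + (n:ℝ)/2 + s = (l:ℝ) + b := by rw [hb']; ring
  rw [hl1, hl2, e1]
  rw [e2] at key
  nlinarith [key]
end

section
/- Let 0 < s < n/2 and let φ, ψ be two positive functions on a σ-finite measure space with φ, ψ ∈ L^{2n/(n+2s)}(μ). Set q = (n−2s)/(n+2s) ∈ (0,1). Then ∫ (φ^q − ψ^q)(φ − ψ) dμ ≥ (q/2) · min{(∫ φ^{2n/(n+2s)} dμ)^{−2s/n}, (∫ ψ^{2n/(n+2s)} dμ)^{−2s/n}} · ‖φ − ψ‖_{L^{2n/(n+2s)}(μ)}². -/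
open MeasureTheory

lemma aux_concave {q : ℝ} (hq0 : 0 < q) (hq1 : q < 1) {a b : ℝ} (hb : 0 < b) (hba : b ≤ a) :
    q * a ^ (q - 1) * (a - b) ≤ a ^ q - b ^ q := by
  have ha : 0 < a := lt_of_lt_of_le hb hba
  have hgm : (b / a) ^ q * 1 ^ (1 - q) ≤ q * (b / a) + (1 - q) * 1 :=
    Real.geom_mean_le_arith_mean2_weighted hq0.le (by linarith) (div_nonneg hb.le ha.le)
      zero_le_one (by ring)
  rw [Real.one_rpow, mul_one, mul_one, Real.div_rpow hb.le ha.le] at hgm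
  have haq : 0 < a ^ q := Real.rpow_pos_of_pos ha q
  have h1 : a ^ (q - 1) = a ^ q / a := Real.rpow_sub_one ha.ne' q
  rw [h1]
  have h2 : b ^ q ≤ a ^ q * (q * (b / a) + (1 - q)) := by
    have := mul_le_mul_of_nonneg_left hgm haq.le
    calc b ^ q = a ^ q * (b ^ q / a ^ q) := by field_simp
    _ ≤ a ^ q * (q * (b / a) + (1 - q)) := this
  have key : a ^ q * (q * (b / a) + (1 - q)) = a ^ q - q * (a ^ q / a) * (a - b) := by
    field_simp; ring
  linarith [key ▸ h2]

lemma aux_pointwise {q : ℝ} (hq0 : 0 < q) (hq1 : q < 1) {a b : ℝ} (ha : 0 < a) (hb : 0 < b) :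
    q * (max a b ^ (q - 1) * (a - b) ^ 2) ≤ (a ^ q - b ^ q) * (a - b) := by
  rcases le_total b a with h | h
  · rw [max_eq_left h]
    have := mul_le_mul_of_nonneg_right (aux_concave hq0 hq1 hb h) (by linarith : (0:ℝ) ≤ a - b)
    nlinarith [this]
  · rw [max_eq_right h]
    have := mul_le_mul_of_nonneg_right (aux_concave hq0 hq1 ha h) (by linarith : (0:ℝ) ≤ b - a)
    nlinarith [this]

lemma aux_subadd {q : ℝ} (hq0 : 0 ≤ q) (hq1 : q ≤ 1) {x y : ℝ} (hx : 0 ≤ x) (hy : 0 ≤ y) :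
    (x + y) ^ q ≤ x ^ q + y ^ q := by
  have h := NNReal.coe_le_coe.2
    (NNReal.rpow_add_le_add_rpow (Real.toNNReal x) (Real.toNNReal y) hq0 hq1)
  push_cast at h
  rwa [Real.coe_toNNReal x hx, Real.coe_toNNReal y hy] at h

lemma aux_abs_rpow {q : ℝ} (hq0 : 0 ≤ q) (hq1 : q ≤ 1) {a b : ℝ} (ha : 0 ≤ a) (hb : 0 ≤ b) :
    |a ^ q - b ^ q| ≤ |a - b| ^ q := by
  wlog h : b ≤ a generalizing a b
  · have := this hb ha (le_of_not_ge h)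
    rwa [abs_sub_comm (b ^ q), abs_sub_comm b a] at this
  have h1 : a ^ q ≤ (a - b) ^ q + b ^ q := by
    calc a ^ q = (a - b + b) ^ q := by ring_nf
    _ ≤ (a - b) ^ q + b ^ q := aux_subadd hq0 hq1 (by linarith) hb
  have h2 : b ^ q ≤ a ^ q := Real.rpow_le_rpow hb h hq0
  rw [abs_of_nonneg (by linarith : (0:ℝ) ≤ a ^ q - b ^ q), abs_of_nonneg (by linarith : (0:ℝ) ≤ a - b)]
  linarith

lemma aux_holder {α : Type} [MeasurableSpace α] {μ : Measure α} {p r : ℝ}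
    (hpr : Real.HolderConjugate p r) {u v : α → ℝ}
    (hu : AEMeasurable u μ) (hv : AEMeasurable v μ)
    (hu0 : 0 ≤ᵐ[μ] u) (hv0 : 0 ≤ᵐ[μ] v)
    (hup : Integrable (fun x => u x ^ p) μ) (hvr : Integrable (fun x => v x ^ r) μ)
    (huv : Integrable (fun x => u x * v x) μ) :
    ∫ x, u x * v x ∂μ ≤ (∫ x, u x ^ p ∂μ) ^ (1/p) * (∫ x, v x ^ r ∂μ) ^ (1/r) := by
  have hup0 : (0:ℝ) ≤ ∫ x, u x ^ p ∂μ :=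
    integral_nonneg_of_ae (hu0.mono fun x hx => Real.rpow_nonneg hx p)
  have hvr0 : (0:ℝ) ≤ ∫ x, v x ^ r ∂μ :=
    integral_nonneg_of_ae (hv0.mono fun x hx => Real.rpow_nonneg hx r)
  rw [← ENNReal.ofReal_le_ofReal_iff
    (mul_nonneg (Real.rpow_nonneg hup0 _) (Real.rpow_nonneg hvr0 _))]
  have huv0 : 0 ≤ᵐ[μ] fun x => u x * v x := by
    filter_upwards [hu0, hv0] with x h1 h2; exact mul_nonneg h1 h2
  rw [ofReal_integral_eq_lintegral_ofReal huv huv0]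
  rw [ENNReal.ofReal_mul (Real.rpow_nonneg hup0 _),
    ← ENNReal.ofReal_rpow_of_nonneg hup0 (one_div_nonneg.mpr hpr.nonneg),
    ← ENNReal.ofReal_rpow_of_nonneg hvr0 (one_div_nonneg.mpr hpr.symm.nonneg),
    ofReal_integral_eq_lintegral_ofReal hup (hu0.mono fun x hx => Real.rpow_nonneg hx p),
    ofReal_integral_eq_lintegral_ofReal hvr (hv0.mono fun x hx => Real.rpow_nonneg hx r)]
  have h1 : ∫⁻ x, ENNReal.ofReal (u x * v x) ∂μ =
      ∫⁻ x, (fun y => ENNReal.ofReal (u y)) x * (fun y => ENNReal.ofReal (v y)) x ∂μ := by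
    refine lintegral_congr_ae ?_
    filter_upwards [hu0] with x hx
    simp [ENNReal.ofReal_mul hx]
  have h2 : ∫⁻ x, ENNReal.ofReal (u x ^ p) ∂μ = ∫⁻ x, ENNReal.ofReal (u x) ^ p ∂μ := by
    refine lintegral_congr_ae ?_
    filter_upwards [hu0] with x hx
    rw [ENNReal.ofReal_rpow_of_nonneg hx hpr.nonneg]
  have h3 : ∫⁻ x, ENNReal.ofReal (v x ^ r) ∂μ = ∫⁻ x, ENNReal.ofReal (v x) ^ r ∂μ := by
    refine lintegral_congr_ae ?_
    filter_upwards [hv0] with x hx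
    rw [ENNReal.ofReal_rpow_of_nonneg hx hpr.symm.nonneg]
  rw [h1, h2, h3]
  exact ENNReal.lintegral_mul_le_Lp_mul_Lq μ hpr hu.ennreal_ofReal hv.ennreal_ofReal


lemma aux_min_rpow {x y e : ℝ} (hx : 0 < x) (hy : 0 < y) (he : e ≤ 0) :
    min (x ^ e) (y ^ e) = max x y ^ e := by
  rcases le_total x y with h | h
  · rw [max_eq_right h, min_eq_right (Real.rpow_le_rpow_of_nonpos hx h he)]
  · rw [max_eq_left h, min_eq_left (Real.rpow_le_rpow_of_nonpos hy h he)]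


/-- Coercivity of the nonlinearity for positive functions: with `q = (n−2s)/(n+2s)`,
`∫ (φ^q − ψ^q)(φ − ψ) dμ ≥ (q/2) min{(∫φ^{q+1})^{−2s/n}, (∫ψ^{q+1})^{−2s/n}} ‖φ−ψ‖_{L^{q+1}}²`. -/
theorem coercivity_positive (n : ℕ) (hn : 1 ≤ n) (s : ℝ) (hs0 : 0 < s) (hs : s < n / 2)
    {α : Type} [MeasurableSpace α] (μ : Measure α) [SigmaFinite μ]
    (φ ψ : α → ℝ) (hφpos : ∀ᵐ x ∂μ, 0 < φ x) (hψpos : ∀ᵐ x ∂μ, 0 < ψ x)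
    (hφ : MemLp φ (ENNReal.ofReal (2 * n / (n + 2 * s))) μ)
    (hψ : MemLp ψ (ENNReal.ofReal (2 * n / (n + 2 * s))) μ) :
    (∫ x, (φ x ^ ((n - 2 * s) / (n + 2 * s)) - ψ x ^ ((n - 2 * s) / (n + 2 * s))) *
        (φ x - ψ x) ∂μ) ≥
      ((n - 2 * s) / (n + 2 * s)) / 2 *
        min ((∫ x, φ x ^ (2 * n / (n + 2 * s)) ∂μ) ^ (-(2 * s) / n))
            ((∫ x, ψ x ^ (2 * n / (n + 2 * s)) ∂μ) ^ (-(2 * s) / n)) *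
        ((∫ x, |φ x - ψ x| ^ (2 * n / (n + 2 * s)) ∂μ) ^ ((n + 2 * s) / (2 * n))) ^ 2 := by
  have hN1 : (1:ℝ) ≤ (n:ℝ) := by exact_mod_cast hn
  have hN : (0:ℝ) < (n:ℝ) := by linarith
  have hsN : 2 * s < (n:ℝ) := by
    rw [lt_div_iff₀ (by norm_num : (0:ℝ) < 2)] at hs; linarith
  set q : ℝ := ((n:ℝ) - 2*s) / ((n:ℝ) + 2*s) with hq_def
  set p : ℝ := 2 * (n:ℝ) / ((n:ℝ) + 2*s) with hp_def
  set e : ℝ := -(2*s) / (n:ℝ) with he_def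
  have hden : (0:ℝ) < (n:ℝ) + 2*s := by linarith
  have hq0 : 0 < q := div_pos (by linarith) hden
  have hq1 : q < 1 := (div_lt_one hden).mpr (by linarith)
  have hp0 : (0:ℝ) < p := div_pos (by linarith) hden
  have hpq : p = q + 1 := by rw [hq_def, hp_def]; field_simp; ring
  have hp1 : 1 < p := by rw [hpq]; linarith
  have hp2 : p < 2 := by rw [hpq]; linarith
  have he0 : e ≤ 0 := le_of_lt (div_neg_of_neg_of_pos (by linarith) hN)
  have hene : e ≠ 0 := ne_of_lt (div_neg_of_neg_of_pos (by linarith) hN)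
  -- integrability of p-th powers
  have hpne : ENNReal.ofReal p ≠ 0 := by simp [ENNReal.ofReal_eq_zero, not_le, hp0]
  have hptop : ENNReal.ofReal p ≠ ⊤ := ENNReal.ofReal_ne_top
  have htoReal : (ENNReal.ofReal p).toReal = p := ENNReal.toReal_ofReal hp0.le
  have hφae : AEMeasurable φ μ := hφ.aestronglyMeasurable.aemeasurable
  have hψae : AEMeasurable ψ μ := hψ.aestronglyMeasurable.aemeasurable
  have hφp : Integrable (fun x => φ x ^ p) μ := by
    have h := hφ.integrable_norm_rpow hpne hptop
    rw [htoReal] at h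
    refine h.congr ?_
    filter_upwards [hφpos] with x hx
    rw [Real.norm_eq_abs, abs_of_pos hx]
  have hψp : Integrable (fun x => ψ x ^ p) μ := by
    have h := hψ.integrable_norm_rpow hpne hptop
    rw [htoReal] at h
    refine h.congr ?_
    filter_upwards [hψpos] with x hx
    rw [Real.norm_eq_abs, abs_of_pos hx]
  have hDp : Integrable (fun x => |φ x - ψ x| ^ p) μ := by
    have h := (hφ.sub hψ).integrable_norm_rpow hpne hptop
    rw [htoReal] at h
    refine h.congr (Filter.Eventually.of_forall fun x => ?_)
    simp [Real.norm_eq_abs]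
  -- the max function
  set m : α → ℝ := fun x => max (φ x) (ψ x) with hm_def
  have hmae : AEMeasurable m μ := hφae.max hψae
  have hmpos : ∀ᵐ x ∂μ, 0 < m x := by
    filter_upwards [hφpos] with x hx; exact lt_max_of_lt_left hx
  set G : α → ℝ := fun x => m x ^ (q-1) * (φ x - ψ x)^2 with hG_def
  have hGae : AEMeasurable G μ := by
    rw [hG_def]; fun_prop
  set F : α → ℝ := fun x => (φ x ^ q - ψ x ^ q) * (φ x - ψ x) with hF_def
  have hFae : AEMeasurable F μ := by
    rw [hF_def]; fun_prop
  have key2 : ∀ᵐ x ∂μ, ‖F x‖ ≤ |φ x - ψ x| ^ p := by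
    filter_upwards [hφpos, hψpos] with x h1 h2
    rw [hF_def, Real.norm_eq_abs, abs_mul]
    calc |φ x ^ q - ψ x ^ q| * |φ x - ψ x| ≤ |φ x - ψ x| ^ q * |φ x - ψ x| :=
          mul_le_mul_of_nonneg_right (aux_abs_rpow hq0.le hq1.le h1.le h2.le) (abs_nonneg _)
      _ = |φ x - ψ x| ^ p := by
          rcases eq_or_ne (φ x - ψ x) 0 with h0 | h0
          · simp [h0, Real.zero_rpow (ne_of_gt hq0), Real.zero_rpow (ne_of_gt hp0)]
          · rw [hpq, Real.rpow_add (abs_pos.mpr h0), Real.rpow_one]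
  have hFint : Integrable F μ := hDp.mono' hFae.aestronglyMeasurable key2
  have key1 : ∀ᵐ x ∂μ, q * G x ≤ F x := by
    filter_upwards [hφpos, hψpos] with x h1 h2
    exact aux_pointwise hq0 hq1 h1 h2
  have hG0 : 0 ≤ᵐ[μ] G := by
    filter_upwards [hmpos] with x hx
    exact mul_nonneg (Real.rpow_nonneg hx.le _) (sq_nonneg _)
  have hGint : Integrable G μ := by
    refine (hFint.const_mul q⁻¹).mono' hGae.aestronglyMeasurable ?_
    filter_upwards [key1, hG0] with x h1 h2
    rw [Real.norm_eq_abs, abs_of_nonneg h2]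
    calc G x = q⁻¹ * (q * G x) := by field_simp
      _ ≤ q⁻¹ * F x := mul_le_mul_of_nonneg_left h1 (inv_nonneg.mpr hq0.le)
  have hmp_int : Integrable (fun x => m x ^ p) μ := by
    refine (hφp.add hψp).mono' (by fun_prop : AEMeasurable (fun x => m x ^ p) μ).aestronglyMeasurable ?_
    filter_upwards [hφpos, hψpos] with x h1 h2
    rw [Real.norm_eq_abs, abs_of_nonneg (Real.rpow_nonneg (le_max_of_le_left h1.le) p)]
    simp only [Pi.add_apply]
    rcases max_choice (φ x) (ψ x) with hmx | hmx
    · rw [hmx]; have := Real.rpow_nonneg h2.le p; linarith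
    · rw [hmx]; have := Real.rpow_nonneg h1.le p; linarith
  set Iφ : ℝ := ∫ x, φ x ^ p ∂μ with hIφ_def
  set Iψ : ℝ := ∫ x, ψ x ^ p ∂μ with hIψ_def
  set X : ℝ := ∫ x, |φ x - ψ x| ^ p ∂μ with hX_def
  have hIφ0 : 0 ≤ Iφ := integral_nonneg_of_ae <| by
    filter_upwards [hφpos] with x hx; exact Real.rpow_nonneg hx.le p
  have hIψ0 : 0 ≤ Iψ := integral_nonneg_of_ae <| by
    filter_upwards [hψpos] with x hx; exact Real.rpow_nonneg hx.le p
  have hX0 : 0 ≤ X := integral_nonneg fun x => Real.rpow_nonneg (abs_nonneg _) p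
  have hF0 : 0 ≤ ∫ x, F x ∂μ := integral_nonneg_of_ae <| by
    filter_upwards [key1, hG0] with x h1 h2
    show (0:ℝ) ≤ F x
    have h2' : (0:ℝ) ≤ G x := h2
    nlinarith [mul_nonneg hq0.le h2']
  rw [ge_iff_le]
  by_cases hdeg : Iφ = 0 ∨ Iψ = 0
  · have hmin : min (Iφ ^ e) (Iψ ^ e) = 0 := by
      rcases hdeg with h | h
      · rw [h, Real.zero_rpow hene]
        exact min_eq_left (Real.rpow_nonneg hIψ0 _)
      · rw [h, Real.zero_rpow hene]
        exact min_eq_right (Real.rpow_nonneg hIφ0 _)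
    rw [hmin, mul_zero, zero_mul]
    exact hF0
  push_neg at hdeg
  have hIφpos : 0 < Iφ := lt_of_le_of_ne hIφ0 (Ne.symm hdeg.1)
  have hIψpos : 0 < Iψ := lt_of_le_of_ne hIψ0 (Ne.symm hdeg.2)
  set T : ℝ := ∫ x, m x ^ p ∂μ with hT_def
  have hTφ : Iφ ≤ T := by
    refine integral_mono_ae hφp hmp_int ?_
    filter_upwards [hφpos] with x hx
    exact Real.rpow_le_rpow hx.le (le_max_left _ _) hp0.le
  have hTpos : 0 < T := lt_of_lt_of_le hIφpos hTφ
  have hT2 : T ≤ Iφ + Iψ := by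
    have h : T ≤ ∫ x, (φ x ^ p + ψ x ^ p) ∂μ := by
      refine integral_mono_ae hmp_int (hφp.add hψp) ?_
      filter_upwards [hφpos, hψpos] with x h1 h2
      rcases max_choice (φ x) (ψ x) with hmx | hmx
      · show m x ^ p ≤ _
        rw [hm_def]; simp only []; rw [hmx]
        have := Real.rpow_nonneg h2.le p; linarith
      · show m x ^ p ≤ _
        rw [hm_def]; simp only []; rw [hmx]
        have := Real.rpow_nonneg h1.le p; linarith
    rwa [integral_add hφp hψp] at h
  have hconj : Real.HolderConjugate (2/p) (2/(1-q)) := by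
    rw [Real.holderConjugate_iff]
    constructor
    · exact (one_lt_div hp0).mpr hp2
    · rw [inv_div, inv_div]
      have : (1:ℝ) - q > 0 := by linarith
      field_simp
      linarith [hpq]
  set u : α → ℝ := fun x => G x ^ (p/2) with hu_def
  set v : α → ℝ := fun x => m x ^ (p*(1-q)/2) with hv_def
  have hu0 : 0 ≤ᵐ[μ] u := by
    filter_upwards [hG0] with x hx; exact Real.rpow_nonneg hx _
  have hv0 : 0 ≤ᵐ[μ] v := by
    filter_upwards [hmpos] with x hx; exact Real.rpow_nonneg hx.le _
  have hueq : ∀ᵐ x ∂μ, u x ^ (2/p) = G x := by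
    filter_upwards [hG0] with x hx
    rw [hu_def]
    show (G x ^ (p/2)) ^ (2/p) = G x
    rw [← Real.rpow_mul hx, show p/2 * (2/p) = 1 by field_simp, Real.rpow_one]
  have hveq : ∀ᵐ x ∂μ, v x ^ (2/(1-q)) = m x ^ p := by
    filter_upwards [hmpos] with x hx
    rw [hv_def]
    show (m x ^ (p*(1-q)/2)) ^ (2/(1-q)) = m x ^ p
    rw [← Real.rpow_mul hx.le]
    congr 1
    have h1q : (1:ℝ) - q ≠ 0 := by intro h; rw [sub_eq_zero] at h; linarith [h]
    field_simp
  have huveq : ∀ᵐ x ∂μ, u x * v x = |φ x - ψ x| ^ p := by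
    filter_upwards [hmpos] with x hx
    rw [hu_def, hv_def, hG_def]
    show (m x ^ (q-1) * (φ x - ψ x)^2) ^ (p/2) * m x ^ (p*(1-q)/2) = |φ x - ψ x| ^ p
    rw [Real.mul_rpow (Real.rpow_nonneg hx.le _) (sq_nonneg _)]
    rw [← Real.rpow_mul hx.le]
    rw [← sq_abs, ← Real.rpow_natCast |φ x - ψ x| 2, ← Real.rpow_mul (abs_nonneg _)]
    rw [mul_assoc, mul_comm (|φ x - ψ x| ^ (((2:ℕ):ℝ) * (p/2))), ← mul_assoc,
      ← Real.rpow_add hx]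
    rw [show (q-1) * (p/2) + p*(1-q)/2 = 0 by ring, Real.rpow_zero, one_mul]
    congr 1
    push_cast
    ring
  have humeas : AEMeasurable u μ := by rw [hu_def]; fun_prop
  have hvmeas : AEMeasurable v μ := by rw [hv_def]; fun_prop
  have hup : Integrable (fun x => u x ^ (2/p)) μ := hGint.congr (hueq.mono fun x hx => hx.symm)
  have hvr : Integrable (fun x => v x ^ (2/(1-q))) μ := hmp_int.congr (hveq.mono fun x hx => hx.symm)
  have huv : Integrable (fun x => u x * v x) μ := hDp.congr (huveq.mono fun x hx => hx.symm)
  have hHold := aux_holder hconj humeas hvmeas hu0 hv0 hup hvr huv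
  rw [integral_congr_ae huveq, integral_congr_ae hueq, integral_congr_ae hveq,
    one_div_div, one_div_div] at hHold
  set G₀ : ℝ := ∫ x, G x ∂μ with hG₀_def
  have hG₀0 : 0 ≤ G₀ := integral_nonneg_of_ae hG0
  have h5 : X ^ (2/p) ≤ G₀ * T ^ ((1-q)/p) := by
    have h := Real.rpow_le_rpow hX0 hHold (by positivity : (0:ℝ) ≤ 2/p)
    rwa [Real.mul_rpow (Real.rpow_nonneg hG₀0 _) (Real.rpow_nonneg hTpos.le _),
      ← Real.rpow_mul hG₀0, ← Real.rpow_mul hTpos.le,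
      show p/2 * (2/p) = 1 by field_simp, Real.rpow_one,
      show (1-q)/2 * (2/p) = (1-q)/p by rw [div_mul_div_comm]; ring_nf] at h
  have hTppos : (0:ℝ) < T ^ ((1-q)/p) := Real.rpow_pos_of_pos hTpos _
  have h6 : X ^ (2/p) * T ^ (-((1-q)/p)) ≤ G₀ := by
    rw [Real.rpow_neg hTpos.le, ← div_eq_mul_inv, div_le_iff₀ hTppos]
    exact h5
  have hexp : -((1-q)/p) = e := by
    rw [hq_def, hp_def, he_def]
    field_simp
    ring
  rw [hexp] at h6
  have hMpos : 0 < max Iφ Iψ := lt_max_of_lt_left hIφpos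
  have h8 : T ≤ 2 * max Iφ Iψ := by
    have h1 := le_max_left Iφ Iψ
    have h2 := le_max_right Iφ Iψ
    linarith
  have h9 : (2 * max Iφ Iψ) ^ e ≤ T ^ e := Real.rpow_le_rpow_of_nonpos hTpos h8 he0
  have h10 : (2:ℝ)⁻¹ ≤ (2:ℝ) ^ e := by
    have he1 : (-1:ℝ) ≤ e := by
      rw [he_def, neg_div]
      have : 2 * s / (n:ℝ) ≤ 1 := (div_le_one hN).mpr hsN.le
      linarith
    calc (2:ℝ)⁻¹ = (2:ℝ) ^ (-1:ℝ) := (Real.rpow_neg_one 2).symm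
      _ ≤ (2:ℝ) ^ e := Real.rpow_le_rpow_of_exponent_le one_le_two he1
  have hminmax : min (Iφ ^ e) (Iψ ^ e) = max Iφ Iψ ^ e := aux_min_rpow hIφpos hIψpos he0
  have hXsq : (X ^ (((n:ℝ) + 2*s)/(2*(n:ℝ)))) ^ 2 = X ^ (2/p) := by
    rw [← Real.rpow_natCast (X ^ (((n:ℝ) + 2*s)/(2*(n:ℝ)))) 2, ← Real.rpow_mul hX0]
    congr 1
    rw [hp_def]
    push_cast
    rw [div_div_eq_mul_div, div_mul_eq_mul_div, div_eq_div_iff (by positivity) (by positivity)]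
    ring
  have hstep1 : q * G₀ ≤ ∫ x, F x ∂μ := by
    have h := integral_mono_ae (hGint.const_mul q) hFint key1
    rwa [integral_const_mul] at h
  have hXp0 : 0 ≤ X ^ (2/p) := Real.rpow_nonneg hX0 _
  have hMe0 : 0 ≤ max Iφ Iψ ^ e := Real.rpow_nonneg hMpos.le _
  calc q / 2 * min (Iφ ^ e) (Iψ ^ e) * (X ^ (((n:ℝ) + 2*s)/(2*(n:ℝ)))) ^ 2
      = q * (X ^ (2/p) * (2⁻¹ * max Iφ Iψ ^ e)) := by rw [hminmax, hXsq]; ring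
    _ ≤ q * (X ^ (2/p) * ((2:ℝ) ^ e * max Iφ Iψ ^ e)) := by
        refine mul_le_mul_of_nonneg_left (mul_le_mul_of_nonneg_left ?_ hXp0) hq0.le
        exact mul_le_mul_of_nonneg_right h10 hMe0
    _ = q * (X ^ (2/p) * (2 * max Iφ Iψ) ^ e) := by
        rw [Real.mul_rpow (by norm_num) hMpos.le]
    _ ≤ q * (X ^ (2/p) * T ^ e) :=
        mul_le_mul_of_nonneg_left (mul_le_mul_of_nonneg_left h9 hXp0) hq0.le
    _ ≤ q * G₀ := mul_le_mul_of_nonneg_left h6 hq0.le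
    _ ≤ ∫ x, F x ∂μ := hstep1
end
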